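/- Let S^R be the maximally permissive supervisor for the attacked closed-loop system G^R that is safe with respect to the resilient specification Ha and nonblocking. If there exists a detection state x_d ∈ X_det whose post-attack state (A, x_d) does not belong to the state set of S^R, then S^R is not resilient with respect to Σ_{c,v} and G_robust. -/
import Mathlib


/-!
Common formalization of supervisory control of DES under actuator-enablement
attacks, following the natural-language context.

* A plant is a DFA with partial transition function `f : X → E → Option X`
  and initial state `x0`; `runFrom` extends `f` to strings; `Lang f x0` is the
  generated language.
* A strict subautomaton of an automaton is represented by its state set
  `Q : Set X`, with induced transition function `subStep f Q`.
* Attacked events are modelled by the alphabet `E ⊕ E`: `Sum.inl e` is the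
  ordinary event `e`, `Sum.inr e` is the attacked copy `eᵃ` (meaningful for
  `e ∈ Scv`).
* The attacked plant `gaStep`, attacked supervisor `saStep` (state `none`
  playing the role of the fresh state `A`), and their synchronous composition
  `grStep` (the attacked closed-loop system `G^R = Sa ∥ Ga`) are defined below,
  together with detection states, robust-recovery, the resilient specification
  `Ha`, supervisors for `G^R`, and resilience.
-/

open Classical List

namespace RobustRec

variable {X : Type*} {E : Type*}

/-- Extension of a partial transition function to strings. -/
def runFrom (f : X → E → Option X) : X → List E → Option X
  | x, [] => some x
  | x, e :: w => (f x e).bind fun y => runFrom f y w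

/-- Language generated from state `x0`. -/
def Lang (f : X → E → Option X) (x0 : X) : Set (List E) :=
  {w | (runFrom f x0 w).isSome}

/-- Transition function of the strict (induced) subautomaton with state set `Q`:
a transition is defined iff it is defined in the big automaton and both its
endpoints lie in `Q`. -/
noncomputable def subStep (f : X → E → Option X) (Q : Set X) : X → E → Option X :=
  fun x e => (f x e).bind fun y => if x ∈ Q ∧ y ∈ Q then some y else none

/-- Vulnerable states: those where some vulnerable controllable event is feasible. -/
def vulnStates (f : X → E → Option X) (Scv : Set E) : Set X :=
  {x | ∃ e ∈ Scv, (f x e).isSome}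

/-- A supervisor for the plant `(f, x0)`, represented by its state set `XS`
(the induced strict subautomaton): it contains `x0`, is controllable w.r.t.
the uncontrollable events `Suc`, and is safe w.r.t. the unsafe states `XUS`. -/
structure IsSupervisor (f : X → E → Option X) (x0 : X) (Suc : Set E)
    (XUS : Set X) (XS : Set X) : Prop where
  init_mem : x0 ∈ XS
  controllable : ∀ x ∈ XS, ∀ e ∈ Suc, ∀ y, f x e = some y → y ∈ XS
  safe : ∀ x ∈ XS, x ∉ XUS

/-- The attacked plant `Ga`: all transitions of `G`, plus, for every transition
on a vulnerable event `σ ∈ Scv`, a parallel transition on its attacked copy. -/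
noncomputable def gaStep (f : X → E → Option X) (Scv : Set E) :
    X → E ⊕ E → Option X
  | x, Sum.inl e => f x e
  | x, Sum.inr e => if e ∈ Scv then f x e else none

/-- The attacked supervisor `Sa`: states are `some x` for states `x` of `S`
plus the fresh state `A = none` with a self-loop on every event; for every
state `x` of `S` and `σ ∈ Scv` with `f_S(x,σ)` undefined there is a transition
on `σᵃ` from `x` to `A`. -/
noncomputable def saStep (f : X → E → Option X) (XS : Set X) (Scv : Set E) :
    Option X → E ⊕ E → Option (Option X)
  | none, _ => some none
  | some x, Sum.inl e => (subStep f XS x e).map some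
  | some x, Sum.inr e =>
      if e ∈ Scv ∧ x ∈ XS ∧ subStep f XS x e = none then some none else none

/-- Synchronous composition of two automata over a common alphabet. -/
def prodStep {X1 X2 A : Type*} (f1 : X1 → A → Option X1) (f2 : X2 → A → Option X2) :
    X1 × X2 → A → Option (X1 × X2) :=
  fun p a => (f1 p.1 a).bind fun y1 => (f2 p.2 a).map fun y2 => (y1, y2)

/-- The attacked closed-loop system `G^R = Sa ∥ Ga`. Its post-attack states are
those of the form `(none, x)`, i.e. `(A, x)`. -/
noncomputable def grStep (f : X → E → Option X) (XS : Set X) (Scv : Set E) :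
    Option X × X → E ⊕ E → Option (Option X × X) :=
  prodStep (saStep f XS Scv) (gaStep f Scv)

/-- Initial state of `G^R`. -/
def grInit (x0 : X) : Option X × X := (some x0, x0)

/-- Embedding of strings over `Σ` into strings over `Σ ∪ Σᵃ_{c,v}`. -/
def embed : List E → List (E ⊕ E) := List.map Sum.inl

/-- The language `L(Sa/Ga)` of the attacked closed-loop system. -/
noncomputable def GRLang (f : X → E → Option X) (x0 : X) (XS : Set X) (Scv : Set E) :
    Set (List (E ⊕ E)) :=
  Lang (grStep f XS Scv) (grInit x0)

/-- The detection language `L_det = {sσ ∈ L(G) | s ∈ L(S/G), σ ∈ Σ_{c,v},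
sσᵃ ∈ L(Sa/Ga)}`. -/
noncomputable def detLang (f : X → E → Option X) (x0 : X) (XS : Set X) (Scv : Set E) :
    Set (List E) :=
  {w | ∃ s σ, w = s ++ [σ] ∧ σ ∈ Scv ∧ w ∈ Lang f x0 ∧
        s ∈ Lang (subStep f XS) x0 ∧ embed s ++ [Sum.inr σ] ∈ GRLang f x0 XS Scv}

/-- The detection states `X_det = {f(x0, sσ) : sσ ∈ L_det}`. -/
noncomputable def detStates (f : X → E → Option X) (x0 : X) (XS : Set X) (Scv : Set E) :
    Set X :=
  {x | ∃ w ∈ detLang f x0 XS Scv, runFrom f x0 w = some x}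

/-- `r` is a robust-recovery strategy from `x` relative to the candidate set `R`
of recoverable states, the robust region `XR` and the bad states
`Bad = X_v ∪ X_US`: (1) `r` leads into `XR`; (2) no prefix of `r` visits `Bad`;
(3) no prefix of `r` can uncontrollably reach `Bad`; (4) any one-step
uncontrollable deviation from `r` lands in `R`. -/
def IsRecoveryPath (f : X → E → Option X) (Suc : Set E) (XR Bad : Set X)
    (R : Set X) (x : X) (r : List E) : Prop :=
  (∃ y ∈ XR, runFrom f x r = some y) ∧
  (∀ t, t <+: r → ∀ y, runFrom f x t = some y → y ∉ Bad) ∧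
  (∀ t, t <+: r → ∀ u : List E, (∀ e ∈ u, e ∈ Suc) →
      ∀ y, runFrom f x (t ++ u) = some y → y ∉ Bad) ∧
  (∀ t, t <+: r → ∀ e ∈ Suc, ∀ y, runFrom f x (t ++ [e]) = some y →
      ¬ (t ++ [e]) <+: r → y ∈ R)

/-- The set `R` of AE-robust recoverable states: the largest subset of
`X \ Bad` each of whose elements admits a robust-recovery strategy (relative
to the set itself). -/
def recSet (f : X → E → Option X) (Suc : Set E) (XR Bad : Set X) : Set X :=
  ⋃₀ {R | R ⊆ Badᶜ ∧ ∀ x ∈ R, ∃ r, IsRecoveryPath f Suc XR Bad R x r}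

/-- The attacked system `Sa/Ga` is AE-robust recoverable w.r.t. the robust
region `XR` if every detection state is AE-robust recoverable. -/
noncomputable def AERobustRecoverable (f : X → E → Option X) (x0 : X)
    (Suc Scv : Set E) (XUS XS XR : Set X) : Prop :=
  detStates f x0 XS Scv ⊆ recSet f Suc XR (vulnStates f Scv ∪ XUS)

/-- Reachable states of `G^R` (the state set of the synchronous composition). -/
noncomputable def grStates (f : X → E → Option X) (x0 : X) (XS : Set X) (Scv : Set E) :
    Set (Option X × X) :=
  {p | ∃ w, runFrom (grStep f XS Scv) (grInit x0) w = some p}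

/-- A supervisor for `G^R`, represented by its state set `Q` (inducing a strict
subautomaton of `G^R`): it contains the initial state and is controllable
w.r.t. `Suc` (attacked events being controllable). -/
structure IsGRSupervisor (f : X → E → Option X) (x0 : X) (Suc Scv : Set E)
    (XS : Set X) (Q : Set (Option X × X)) : Prop where
  subset : Q ⊆ grStates f x0 XS Scv
  init_mem : grInit x0 ∈ Q
  controllable : ∀ p ∈ Q, ∀ e ∈ Suc, ∀ q, grStep f XS Scv p (Sum.inl e) = some q → q ∈ Q

/-- State set of the resilient specification `Ha`: `G^R` minus every post-attack
state `(A, x)` with `x ∈ X_v ∪ X_US`. -/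
def haCarrier (f : X → E → Option X) (Scv : Set E) (XUS : Set X) :
    Set (Option X × X) :=
  {p | ¬ (p.1 = none ∧ p.2 ∈ vulnStates f Scv ∪ XUS)}

/-- Marked states of `Ha`: post-attack states `(A, x)` with `x` in the robust
region. -/
def haMarked (XR : Set X) : Set (Option X × X) :=
  {p | p.1 = (none : Option X) ∧ p.2 ∈ XR}

/-- The closed-loop language `L(S^R/G^R) = L(S^R)` of a supervisor `Q` for `G^R`. -/
noncomputable def SRLang (f : X → E → Option X) (x0 : X) (XS : Set X) (Scv : Set E)
    (Q : Set (Option X × X)) : Set (List (E ⊕ E)) :=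
  Lang (subStep (grStep f XS Scv) Q) (grInit x0)

/-- `S^R` is safe w.r.t. the resilient specification `Ha`: `L(S^R) ⊆ L(Ha)`. -/
noncomputable def SafeWrtHa (f : X → E → Option X) (x0 : X) (XS : Set X)
    (Scv : Set E) (XUS : Set X) (Q : Set (Option X × X)) : Prop :=
  SRLang f x0 XS Scv Q ⊆
    Lang (subStep (grStep f XS Scv) (haCarrier f Scv XUS)) (grInit x0)

/-- `S^R` is nonblocking: from every post-attack state of `S^R`, a marked state
of `Ha` is reachable within `S^R`. -/
noncomputable def NonblockingSR (f : X → E → Option X) (XS : Set X) (Scv : Set E)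
    (XR : Set X) (Q : Set (Option X × X)) : Prop :=
  ∀ p ∈ Q, p.1 = (none : Option X) →
    ∃ w q, runFrom (subStep (grStep f XS Scv) Q) p w = some q ∧ q ∈ haMarked XR

/-- `S^R` is maximally permissive among safe nonblocking supervisors for `G^R`. -/
noncomputable def MaxPermissive (f : X → E → Option X) (x0 : X) (Suc Scv : Set E)
    (XS XUS XR : Set X) (Q : Set (Option X × X)) : Prop :=
  ∀ Q', IsGRSupervisor f x0 Suc Scv XS Q' → SafeWrtHa f x0 XS Scv XUS Q' →
    NonblockingSR f XS Scv XR Q' → SRLang f x0 XS Scv Q' ⊆ SRLang f x0 XS Scv Q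

/-- `S^R` (given by its state set `Q`) is resilient w.r.t. `Scv` and the robust
region `XR`: it permits the full nominal behavior `L(S/G)`, and after any
AE-attack `sσᵃ` feasible in `L(Sa/Ga)` it permits the attack, keeps all its
subsequent behavior out of `Bad = X_v ∪ X_US`, and can always be extended
within `L(S^R)` to reach a post-attack state `(A, x)` with `x ∈ XR`; i.e. it
enforces a robust-recovery strategy from the detection state. -/
noncomputable def ResilientSup (f : X → E → Option X) (x0 : X) (Scv : Set E)
    (XS XR Bad : Set X) (Q : Set (Option X × X)) : Prop :=
  (∀ s ∈ Lang (subStep f XS) x0, embed s ∈ SRLang f x0 XS Scv Q) ∧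
  ∀ s : List E, embed s ∈ SRLang f x0 XS Scv Q →
    ∀ σ ∈ Scv, embed s ++ [Sum.inr σ] ∈ GRLang f x0 XS Scv →
      embed s ++ [Sum.inr σ] ∈ SRLang f x0 XS Scv Q ∧
      ∀ t : List E, embed s ++ [Sum.inr σ] ++ embed t ∈ SRLang f x0 XS Scv Q →
        (∀ t', t' <+: t → ∀ y, runFrom f x0 (s ++ σ :: t') = some y →
            y ∉ Bad) ∧
        ∃ u q, runFrom (subStep (grStep f XS Scv) Q) (grInit x0)
                 (embed s ++ [Sum.inr σ] ++ embed t ++ u) = some q ∧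
               q.1 = (none : Option X) ∧ q.2 ∈ XR

/-- A prefix-closed language. -/
def PrefixClosed (K : Set (List E)) : Prop := ∀ s t : List E, s ++ t ∈ K → s ∈ K

/-- `K` is controllable w.r.t. the language `M` and uncontrollable events `Suc`. -/
def ControllableLang (K M : Set (List E)) (Suc : Set E) : Prop :=
  ∀ s ∈ K, ∀ e ∈ Suc, s ++ [e] ∈ M → s ++ [e] ∈ K

/-- The supremal controllable (prefix-closed) sublanguage of `M` w.r.t. `LG`. -/
def supC (M LG : Set (List E)) (Suc : Set E) : Set (List E) :=
  ⋃₀ {K | K ⊆ M ∧ PrefixClosed K ∧ ControllableLang K LG Suc}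

section Aux

variable {X : Type*} {E : Type*}

lemma runFrom_append (f : X → E → Option X) (x : X) (w v : List E) :
    runFrom f x (w ++ v) = (runFrom f x w).bind fun y => runFrom f y v := by
  induction w generalizing x with
  | nil => simp [runFrom]
  | cons e w ih =>
      simp only [List.cons_append, runFrom]
      cases f x e with
      | none => simp
      | some y => simp [ih]

lemma subStep_some {f : X → E → Option X} {Q : Set X} {x y : X} {e : E}
    (h : subStep f Q x e = some y) : f x e = some y ∧ x ∈ Q ∧ y ∈ Q := by
  unfold subStep at h
  cases hf : f x e with
  | none => simp [hf] at h
  | some z =>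
      rw [hf, Option.bind_some] at h
      by_cases hc : x ∈ Q ∧ z ∈ Q
      · rw [if_pos hc] at h
        cases h
        exact ⟨rfl, hc⟩
      · rw [if_neg hc] at h
        cases h

lemma runFrom_subStep_le {f : X → E → Option X} {Q : Set X} {x y : X} {w : List E}
    (h : runFrom (subStep f Q) x w = some y) : runFrom f x w = some y := by
  induction w generalizing x with
  | nil => exact h
  | cons e w ih =>
      simp only [runFrom] at h ⊢
      cases hs : subStep f Q x e with
      | none => simp [hs] at h
      | some z =>
          simp only [hs, Option.bind_some] at h
          simp [(subStep_some hs).1, ih h]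

lemma runFrom_last_mem {f : X → E → Option X} {Q : Set X} {x : X} {q : X}
    {w : List E} {e : E}
    (h : runFrom (subStep f Q) x (w ++ [e]) = some q) : q ∈ Q := by
  rw [runFrom_append] at h
  cases hw : runFrom (subStep f Q) x w with
  | none => simp [hw] at h
  | some p =>
      simp only [hw, Option.bind_some, runFrom] at h
      cases hs : subStep f Q p e with
      | none => simp [hs] at h
      | some z =>
          simp only [hs, Option.bind_some, runFrom] at h
          cases h
          exact (subStep_some hs).2.2

lemma runFrom_gaStep_embed (f : X → E → Option X) (Scv : Set E) (x : X) (s : List E) :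
    runFrom (gaStep f Scv) x (embed s) = runFrom f x s := by
  induction s generalizing x with
  | nil => rfl
  | cons e s ih =>
      simp only [embed, List.map_cons, runFrom, gaStep]
      cases f x e with
      | none => rfl
      | some y => simpa [embed] using ih y

lemma grRun_snd {f : X → E → Option X} {XS : Set X} {Scv : Set E}
    {p q : Option X × X} {w : List (E ⊕ E)}
    (h : runFrom (grStep f XS Scv) p w = some q) :
    runFrom (gaStep f Scv) p.2 w = some q.2 := by
  induction w generalizing p with
  | nil => cases h; rfl
  | cons a w ih =>
      simp only [runFrom] at h ⊢
      cases hg : grStep f XS Scv p a with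
      | none => simp [hg] at h
      | some r =>
          simp only [hg, Option.bind_some] at h
          unfold grStep prodStep at hg
          cases h1 : saStep f XS Scv p.1 a with
          | none => simp [h1] at hg
          | some y1 =>
              cases h2 : gaStep f Scv p.2 a with
              | none => simp [h1, h2] at hg
              | some y2 =>
                  simp only [h1, h2, Option.bind_some, Option.map_some,
                    Option.some_inj] at hg
                  subst hg
                  simpa [h2] using ih h

lemma grStep_inr_fst {f : X → E → Option X} {XS : Set X} {Scv : Set E}
    {p q : Option X × X} {e : E}
    (h : grStep f XS Scv p (Sum.inr e) = some q) : q.1 = none := by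
  unfold grStep prodStep at h
  cases h1 : saStep f XS Scv p.1 (Sum.inr e) with
  | none => simp [h1] at h
  | some y1 =>
      have hy1 : y1 = none := by
        cases p1 : p.1 with
        | none => rw [p1] at h1; simpa [saStep] using h1.symm
        | some x =>
            rw [p1] at h1
            unfold saStep at h1
            by_cases hc : e ∈ Scv ∧ x ∈ XS ∧ subStep f XS x e = none
            · simp [hc] at h1; exact h1.symm
            · simp [hc] at h1
      subst hy1
      cases h2 : gaStep f Scv p.2 (Sum.inr e) with
      | none => simp [h1, h2] at h
      | some y2 =>
          simp only [h1, h2, Option.bind_some, Option.map_some,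
            Option.some_inj] at h
          subst h; rfl

end Aux

end RobustRec

/-- the "only if" direction of Theorem 1, contrapositive form.
Let `S^R` (state set `Q`) be the maximally permissive safe nonblocking
supervisor for `G^R` w.r.t. `Ha`. If some detection state `x_d` has its
post-attack state `(A, x_d)` outside the state set of `S^R`, then `S^R` is not
resilient w.r.t. `Σ_{c,v}` and `G_robust`. -/
theorem RobustRec.not_resilient_of_detState_not_mem
    {X E : Type*} [Fintype X] [Fintype E]
    (f : X → E → Option X) (x0 : X) (Sc Suc Scv : Set E) (XUS XS XR : Set X)
    (hdisj : Sc ∩ Suc = ∅) (hcover : Sc ∪ Suc = Set.univ) (hScv : Scv ⊆ Sc)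
    (hS : IsSupervisor f x0 Suc XUS XS)
    (hXR : XR ∩ (vulnStates f Scv ∪ XUS) = ∅)
    (Q : Set (Option X × X))
    (hQ : IsGRSupervisor f x0 Suc Scv XS Q)
    (hsafe : SafeWrtHa f x0 XS Scv XUS Q)
    (hnb : NonblockingSR f XS Scv XR Q)
    (hmax : MaxPermissive f x0 Suc Scv XS XUS XR Q)
    (hdet : ∃ x ∈ detStates f x0 XS Scv, ((none : Option X), x) ∉ Q) :
    ¬ ResilientSup f x0 Scv XS XR (vulnStates f Scv ∪ XUS) Q := by
  intro hres
  obtain ⟨x, hx, hxQ⟩ := hdet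
  obtain ⟨w, hw, hrun⟩ := hx
  obtain ⟨s, σ, hweq, hσ, hwL, hsL, hGR⟩ := hw
  subst hweq
  -- resilience gives the attacked string in L(S^R)
  have h1 : embed s ∈ SRLang f x0 XS Scv Q := hres.1 s hsL
  have h2 := (hres.2 s h1 σ hσ hGR).1
  -- extract the final state of the run inside Q
  obtain ⟨q, hq⟩ := Option.isSome_iff_exists.mp h2
  have hqQ : q ∈ Q := by
    have : embed s ++ [Sum.inr σ] = embed s ++ [Sum.inr σ] := rfl
    exact runFrom_last_mem hq
  have hbig : runFrom (grStep f XS Scv) (grInit x0) (embed s ++ [Sum.inr σ]) = some q :=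
    runFrom_subStep_le hq
  -- first component of q is none
  have hfst : q.1 = none := by
    rw [runFrom_append] at hbig
    cases hw1 : runFrom (grStep f XS Scv) (grInit x0) (embed s) with
    | none => simp [hw1] at hbig
    | some p =>
        simp only [hw1, Option.bind_some, runFrom] at hbig
        cases hs1 : grStep f XS Scv p (Sum.inr σ) with
        | none => simp [hs1] at hbig
        | some r =>
            simp only [hs1, Option.bind_some, runFrom, Option.some_inj] at hbig
            subst hbig
            exact grStep_inr_fst hs1
  -- second component of q is x
  have hsnd : q.2 = x := by
    have hga : runFrom (gaStep f Scv) x0 (embed s ++ [Sum.inr σ]) = some q.2 :=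
      grRun_snd hbig
    rw [runFrom_append, runFrom_gaStep_embed] at hga
    rw [runFrom_append] at hrun
    cases hrs : runFrom f x0 s with
    | none => rw [hrs] at hrun; simp at hrun
    | some xs =>
        rw [hrs] at hga hrun
        simp only [Option.bind_some, runFrom] at hga hrun
        have : gaStep f Scv xs (Sum.inr σ) = f xs σ := by simp [gaStep, hσ]
        rw [this] at hga
        cases hfx : f xs σ with
        | none => rw [hfx] at hrun; simp at hrun
        | some y =>
            rw [hfx] at hga hrun
            simp only [Option.bind_some, runFrom, Option.some_inj] at hga hrun
            rw [← hga]; exact hrun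
  have : q = ((none : Option X), x) := Prod.ext hfst hsnd
  rw [this] at hqQ
  exact hxQ hqQ
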